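/- The numerical range of a sesquilinear form is convex: if Ω is a sesquilinear form on a complex vector subspace D of a Hilbert space H, then the set { Ω(ξ,ξ) : ξ ∈ D, ‖ξ‖ = 1 } is a convex subset of ℂ. -/

import Mathlib

open scoped ComplexConjugate

/-!
Given unit vectors `x`, `y`, replacing `Ω` by `(Ω - Ω(x,x)⟪·,·⟫) / (Ω(y,y) - Ω(x,x))`, an affine
image of it on the unit sphere, reduces convexity to the case `Ω(x,x) = 0`, `Ω(y,y) = 1`, where
`[0,1]` must lie in the numerical range. Multiplying `y` by a phase makes `Ω(x,y) + Ω(y,x)` real,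
so `Ω` is real on the segment from `x` to `y`; this segment avoids `0`, and normalizing its points
gives a continuous real path in the numerical range from `0` to `1`. The intermediate value
theorem concludes.
-/

theorem Complex.exists_norm_eq_one_im_mul_eq_zero (d : ℂ) :
    ∃ u : ℂ, ‖u‖ = 1 ∧ (u * d).im = 0 := by
  refine ⟨exp (-d.arg * I), by simpa using norm_exp_ofReal_mul_I (-d.arg), ?_⟩
  nth_rw 2 [← norm_mul_exp_arg_mul_I d]
  rw [mul_left_comm, ← exp_add]
  simp

theorem smul_add_smul_ne_zero_of_ne_neg {E : Type*} [NormedAddCommGroup E] [NormedSpace ℂ E]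
    {x y : E} (hx : ‖x‖ = 1) (hy : ‖y‖ = 1) (hxy : x ≠ -y) {σ : ℝ} (hσ : σ ∈ Set.Icc (0 : ℝ) 1) :
    ((1 - σ : ℝ) : ℂ) • x + (σ : ℂ) • y ≠ 0 := by
  intro h
  have hnorm := congrArg norm (eq_neg_of_add_eq_zero_left h)
  rw [norm_neg, norm_smul, norm_smul, hx, hy, Complex.norm_real, Complex.norm_real,
    Real.norm_of_nonneg (by linarith [hσ.2]), Real.norm_of_nonneg hσ.1] at hnorm
  have hσ : σ = 1 / 2 := by linarith
  subst hσ
  apply hxy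
  rw [← sub_eq_zero, sub_neg_eq_add]
  norm_num at h
  simpa using congrArg ((2 : ℂ) • ·) h

theorem innerₛₗ_flip_apply_self_of_norm_eq_one {F : Type*} [NormedAddCommGroup F]
    [InnerProductSpace ℂ F] {z : F} (hz : ‖z‖ = 1) :
    (innerₛₗ ℂ).flip z z = 1 := by
  simp [inner_self_eq_norm_sq_to_K, hz]

namespace LinearMap

variable {E : Type*} [NormedAddCommGroup E] [NormedSpace ℂ E]

def numericalRange (B : E →ₗ[ℂ] E →ₗ⋆[ℂ] ℂ) : Set ℂ :=
  (fun x ↦ B x x) '' Metric.sphere 0 1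

variable (B : E →ₗ[ℂ] E →ₗ⋆[ℂ] ℂ)

theorem apply_smul_smul_self (c : ℂ) (x : E) :
    B (c • x) (c • x) = (‖c‖ ^ 2 : ℝ) * B x x := by
  simp only [map_smul, smul_apply, map_smulₛₗ, smul_eq_mul, Complex.ofReal_pow]
  rw [← mul_assoc, ← Complex.mul_conj', mul_comm c]

theorem apply_smul_add_smul_self (s t : ℂ) (x y : E) :
    B (s • x + t • y) (s • x + t • y) =
      s * conj s * B x x + s * conj t * B x y + t * conj s * B y x + t * conj t * B y y := by
  simp only [map_add, map_smul, map_smulₛₗ, add_apply, smul_apply, smul_eq_mul]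
  ring

theorem div_norm_sq_mem_numericalRange {v : E} (hv : v ≠ 0) :
    B v v / (‖v‖ ^ 2 : ℝ) ∈ B.numericalRange := by
  refine ⟨((‖v‖⁻¹ : ℝ) : ℂ) • v, ?_, ?_⟩
  · simp [norm_smul, hv]
  · simp only [apply_smul_smul_self, Complex.norm_real, norm_inv, norm_norm]
    push_cast
    field_simp

theorem exists_norm_eq_one_im_apply_add_apply_eq_zero (x y : E) :
    ∃ u : ℂ, ‖u‖ = 1 ∧ (B x (u • y) + B (u • y) x).im = 0 := by
  obtain ⟨u, hu, hd⟩ := Complex.exists_norm_eq_one_im_mul_eq_zero (B y x - conj (B x y))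
  refine ⟨u, hu, ?_⟩
  simp only [map_smul, map_smulₛₗ, smul_apply, smul_eq_mul]
  simp only [Complex.add_im, Complex.mul_im, Complex.sub_im, Complex.sub_re, Complex.conj_re,
    Complex.conj_im] at hd ⊢
  linarith

theorem ofReal_mem_numericalRange_of_im_eq_zero {x y : E} (hx : ‖x‖ = 1) (hy : ‖y‖ = 1)
    (h₀ : B x x = 0) (h₁ : B y y = 1) (him : (B x y + B y x).im = 0)
    {t : ℝ} (ht : t ∈ Set.Icc (0 : ℝ) 1) : (t : ℂ) ∈ B.numericalRange := by
  set r := (B x y + B y x).re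
  set v : ℝ → E := fun σ ↦ ((1 - σ : ℝ) : ℂ) • x + (σ : ℂ) • y
  have hxy : x ≠ -y := by
    rintro rfl
    simp [h₁] at h₀
  have hv_ne : ∀ σ ∈ Set.Icc (0 : ℝ) 1, v σ ≠ 0 := fun σ hσ ↦
    smul_add_smul_ne_zero_of_ne_neg hx hy hxy hσ
  have hBv : ∀ σ : ℝ, B (v σ) (v σ) = ((σ ^ 2 + (1 - σ) * σ * r : ℝ) : ℂ) := by
    intro σ
    have hr : B x y + B y x = (r : ℂ) := Complex.ext rfl (by simp [him])
    rw [apply_smul_add_smul_self, h₀, h₁, Complex.conj_ofReal, Complex.conj_ofReal]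
    push_cast
    linear_combination ((1 - σ : ℂ) * σ) * hr
  set f : ℝ → ℝ := fun σ ↦ (σ ^ 2 + (1 - σ) * σ * r) / ‖v σ‖ ^ 2
  have hf : ContinuousOn f (Set.Icc 0 1) :=
    ContinuousOn.div (by fun_prop) (by fun_prop) fun σ hσ ↦ by simp [hv_ne σ hσ]
  have hf₀ : f 0 = 0 := by simp [f]
  have hf₁ : f 1 = 1 := by simp [f, v, hy]
  obtain ⟨σ, hσ, rfl⟩ : t ∈ f '' Set.Icc 0 1 := by
    have hivt := intermediate_value_Icc zero_le_one hf
    rw [hf₀, hf₁] at hivt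
    exact hivt ht
  convert B.div_norm_sq_mem_numericalRange (hv_ne σ hσ) using 1
  rw [hBv]
  push_cast [f]
  rfl

theorem ofReal_mem_numericalRange {x y : E} (hx : ‖x‖ = 1) (hy : ‖y‖ = 1)
    (h₀ : B x x = 0) (h₁ : B y y = 1) {t : ℝ} (ht : t ∈ Set.Icc (0 : ℝ) 1) :
    (t : ℂ) ∈ B.numericalRange := by
  obtain ⟨u, hu, him⟩ := B.exists_norm_eq_one_im_apply_add_apply_eq_zero x y
  refine B.ofReal_mem_numericalRange_of_im_eq_zero hx ?_ h₀ ?_ him ht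
  · rw [norm_smul, hu, hy, one_mul]
  · rw [apply_smul_smul_self, hu, h₁]
    norm_num

section InnerProductSpace

variable {F : Type*} [NormedAddCommGroup F] [InnerProductSpace ℂ F]

theorem numericalRange_smul_sub_smul_innerₛₗ_flip (B : F →ₗ[ℂ] F →ₗ⋆[ℂ] ℂ) (c d : ℂ) :
    (c • (B - d • (innerₛₗ ℂ).flip)).numericalRange =
      (fun z ↦ c * (z - d)) '' B.numericalRange := by
  rw [numericalRange, numericalRange, Set.image_image]
  refine Set.image_congr fun z hz ↦ ?_
  simp [innerₛₗ_flip_apply_self_of_norm_eq_one (mem_sphere_zero_iff_norm.1 hz)]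

theorem segment_subset_numericalRange (B : F →ₗ[ℂ] F →ₗ⋆[ℂ] ℂ) {x y : F} (hx : ‖x‖ = 1)
    (hy : ‖y‖ = 1) : segment ℝ (B x x) (B y y) ⊆ B.numericalRange := by
  set a := B x x
  set b := B y y
  rcases eq_or_ne a b with hab | hab
  · rw [hab, segment_same, Set.singleton_subset_iff]
    exact ⟨y, by simpa using hy, rfl⟩
  set Ψ := (b - a)⁻¹ • (B - a • (innerₛₗ ℂ).flip)
  have hΨx : Ψ x x = 0 := by simp [Ψ, innerₛₗ_flip_apply_self_of_norm_eq_one hx, a]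
  have hΨy : Ψ y y = 1 := by
    simp [Ψ, innerₛₗ_flip_apply_self_of_norm_eq_one hy]
    exact inv_mul_cancel₀ (sub_ne_zero.2 hab.symm)
  rw [segment_eq_image]
  rintro _ ⟨θ, hθ, rfl⟩
  obtain ⟨w, hw, hwθ⟩ : (θ : ℂ) ∈ (fun z ↦ (b - a)⁻¹ * (z - a)) '' B.numericalRange :=
    numericalRange_smul_sub_smul_innerₛₗ_flip B _ _ ▸
      Ψ.ofReal_mem_numericalRange hx hy hΨx hΨy hθ
  convert hw using 1
  field_simp [sub_ne_zero.2 hab.symm] at hwθ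
  simp only [Complex.real_smul, Complex.ofReal_sub, Complex.ofReal_one]
  linear_combination -hwθ

theorem convex_numericalRange (B : F →ₗ[ℂ] F →ₗ⋆[ℂ] ℂ) : Convex ℝ B.numericalRange :=
  convex_iff_segment_subset.2 <| by
    rintro _ ⟨x, hx, rfl⟩ _ ⟨y, hy, rfl⟩
    exact B.segment_subset_numericalRange (mem_sphere_zero_iff_norm.1 hx)
      (mem_sphere_zero_iff_norm.1 hy)

end InnerProductSpace

end LinearMap

/-- Toeplitz–Hausdorff for sesquilinear forms: the numerical range
`{Ω(ξ,ξ) : ξ ∈ D, ‖ξ‖ = 1}` of a sesquilinear form `Ω` on a subspace `D` of a complex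
Hilbert space is a convex subset of `ℂ`. -/
theorem stmt14 {H : Type*} [NormedAddCommGroup H] [InnerProductSpace ℂ H]
    (D : Submodule ℂ H) (Ω : D → D → ℂ)
    (hadd₁ : ∀ ξ ξ' η : D, Ω (ξ + ξ') η = Ω ξ η + Ω ξ' η)
    (hsmul₁ : ∀ (c : ℂ) (ξ η : D), Ω (c • ξ) η = c * Ω ξ η)
    (hadd₂ : ∀ ξ η η' : D, Ω ξ (η + η') = Ω ξ η + Ω ξ η')
    (hsmul₂ : ∀ (c : ℂ) (ξ η : D), Ω ξ (c • η) = conj c * Ω ξ η) :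
    Convex ℝ {z : ℂ | ∃ ξ : D, ‖(ξ : H)‖ = 1 ∧ z = Ω ξ ξ} := by
  convert (LinearMap.mk₂'ₛₗ (RingHom.id ℂ) (starRingEnd ℂ) Ω hadd₁ hsmul₁ hadd₂
    hsmul₂).convex_numericalRange using 1
  ext z
  simp [LinearMap.numericalRange, eq_comm]
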